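/- arXiv:2504.09392 — 2 statements merged into one kernel-verified Lean document; each statement's English description precedes it below -/
import Mathlib

section
/- If σ and σ' are victorious probabilistic trace strategies, then for any p ∈ (0,1) the convex combination σ +_p σ' (sending each play s to p·σ(s) + (1−p)·σ'(s)) is victorious. -/
open scoped ENNReal Classical

/-- Active-ending plays over signature `(K, ar)`: alternating sequences of
outputs `k : K` and inputs `i : ar k`. -/
inductive APlay (K : Type) (ar : K → Type) : Type
  | nil : APlay K ar
  | cons (k : K) (i : ar k) (s : APlay K ar) : APlay K ar

variable {K : Type} {ar : K → Type}

/-- Append an output-input pair at the end of an active-ending play. -/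
def APlay.snoc : APlay K ar → (k : K) → ar k → APlay K ar
  | .nil, k, i => .cons k i .nil
  | .cons l j s, k, i => .cons l j (s.snoc k i)

/-- The number of output-input cycles in an active-ending play. -/
def APlay.len : APlay K ar → ℕ
  | .nil => 0
  | .cons _ _ s => s.len + 1

/-- A play-measure: values in `[0,1]` on passive-ending plays (an active play
followed by an output), with `σ_act t = ∑_k σ_pass (t.k)` and
`σ_act (s.k.i) = σ_pass (s.k)`. -/
structure PlayMeasure (K : Type) (ar : K → Type) where
  pass : APlay K ar → K → ℝ≥0∞
  le_one : ∀ t, (∑' k, pass t k) ≤ 1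
  consistent : ∀ s k (i : ar k), pass s k = ∑' l, pass (s.snoc k i) l

/-- The value of a play-measure on an active-ending play. -/
noncomputable def PlayMeasure.act (σ : PlayMeasure K ar) (t : APlay K ar) : ℝ≥0∞ :=
  ∑' k, σ.pass t k

/-- The weight of a play-measure. -/
noncomputable def PlayMeasure.weight (σ : PlayMeasure K ar) : ℝ≥0∞ := σ.act .nil

/-- A partial counterstrategy, given by its set of active-ending plays. -/
structure Counterstrategy (K : Type) (ar : K → Type) where
  act : Set (APlay K ar)
  nil_mem : APlay.nil ∈ act
  prefix_closed : ∀ (s : APlay K ar) (k : K) (i : ar k), s.snoc k i ∈ act → s ∈ act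
  deterministic : ∀ (s : APlay K ar) (k : K) (i j : ar k),
      s.snoc k i ∈ act → s.snoc k j ∈ act → i = j

/-- The passive-ending play `s.k` is a `ρ`-failure: it is in `ρ_pass`
and has no prescribed input. -/
def Counterstrategy.Fails (ρ : Counterstrategy K ar) (s : APlay K ar) (k : K) : Prop :=
  s ∈ ρ.act ∧ ∀ i : ar k, s.snoc k i ∉ ρ.act

/-- `P^m_ρ(σ)`: the sum of `σ_act` over the length-`m` plays in `ρ_act`. -/
noncomputable def contProb (ρ : Counterstrategy K ar) (σ : PlayMeasure K ar) (m : ℕ) : ℝ≥0∞ :=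
  ∑' s : {s : APlay K ar // s ∈ ρ.act ∧ s.len = m}, σ.act s.1

/-- The sum of `σ_pass` over the `ρ`-failures of length `m`. -/
noncomputable def failProb (ρ : Counterstrategy K ar) (σ : PlayMeasure K ar) (m : ℕ) : ℝ≥0∞ :=
  ∑' p : {p : APlay K ar × K // ρ.Fails p.1 p.2 ∧ p.1.len = m}, σ.pass p.1.1 p.1.2

/-- A play-measure is victorious when against every partial counterstrategy,
the probability of play continuing forever is zero. -/
def Victorious (σ : PlayMeasure K ar) : Prop :=
  ∀ ρ : Counterstrategy K ar, (⨅ m, contProb ρ σ m) = 0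

/-- The length-`n` prefix of an infinite play. -/
def prefixPlay (f : ℕ → Σ k : K, ar k) : ℕ → APlay K ar
  | 0 => .nil
  | n + 1 => (prefixPlay f n).snoc (f n).1 (f n).2

/-- A play-measure is well-founded when no infinite play has all its
prefixes in the support. -/
def PlayMeasure.WellFoundedPM (σ : PlayMeasure K ar) : Prop :=
  ¬ ∃ f : ℕ → Σ k : K, ar k, ∀ n, 0 < σ.pass (prefixPlay f n) (f n).1

/-- A play-measure is finitely branching when each active-ending play has
finitely many possible next outputs in the support. -/
def PlayMeasure.FinBranch (σ : PlayMeasure K ar) : Prop :=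
  ∀ t : APlay K ar, {k : K | 0 < σ.pass t k}.Finite

/-- Finitely founded: well-founded and finitely branching. -/
def PlayMeasure.FinFounded (σ : PlayMeasure K ar) : Prop :=
  σ.WellFoundedPM ∧ σ.FinBranch

/-- `f` is uniformly below `g`: there is `d > 0` with `f s + d ≤ g s` on
every passive-ending play `s` in the support of `f`. -/
def UBelow (f g : APlay K ar → K → ℝ≥0∞) : Prop :=
  ∃ d : ℝ≥0∞, 0 < d ∧ ∀ s k, 0 < f s k → f s k + d ≤ g s k

/-!
The continuation probabilities `P^m_ρ` are affine in the play-measure, so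
`P^m_ρ(σ +_p σ') = p P^m_ρ(σ) + (1 - p) P^m_ρ(σ')`. Each `P^m_ρ(σ)` is antitone in `m`
(a continuation of length `m + 1` is determined by its prefix of length `m` and the output
played after it, because `ρ` is deterministic), and for antitone sequences the infimum
commutes with finite nonnegative linear combinations; hence both infima vanishing forces
the infimum for `σ +_p σ'` to vanish.
-/

lemma APlay.len_snoc (s : APlay K ar) (k : K) (i : ar k) :
    (s.snoc k i).len = s.len + 1 := by
  induction s with
  | nil => rfl
  | cons l j t ih => simp [APlay.snoc, APlay.len, ih]

lemma APlay.exists_eq_snoc_of_len_pos (s : APlay K ar) (hs : 0 < s.len) :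
    ∃ (t : APlay K ar) (k : K) (i : ar k), s = t.snoc k i := by
  induction s with
  | nil => simp [APlay.len] at hs
  | cons l j t ih =>
    cases t with
    | nil => exact ⟨.nil, l, j, rfl⟩
    | cons l' j' t' =>
      obtain ⟨u, k, i, hu⟩ := ih (by simp [APlay.len])
      exact ⟨.cons l j u, k, i, by simp [APlay.snoc, hu]⟩

lemma PlayMeasure.act_snoc (σ : PlayMeasure K ar) (s : APlay K ar) (k : K) (i : ar k) :
    σ.act (s.snoc k i) = σ.pass s k := (σ.consistent s k i).symm

lemma Counterstrategy.snoc_eq_of_mem (ρ : Counterstrategy K ar) {s : APlay K ar} {k l : K}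
    {i : ar k} {j : ar l} (hi : s.snoc k i ∈ ρ.act) (hj : s.snoc l j ∈ ρ.act) (hkl : k = l) :
    s.snoc k i = s.snoc l j := by
  subst hkl
  rw [ρ.deterministic s k i j hi hj]

lemma contProb_succ_le (ρ : Counterstrategy K ar) (σ : PlayMeasure K ar) (m : ℕ) :
    contProb ρ σ (m + 1) ≤ contProb ρ σ m := by
  have unsnoc : ∀ s : {s : APlay K ar // s ∈ ρ.act ∧ s.len = m + 1},
      ∃ (t : APlay K ar) (k : K) (i : ar k), s.1 = t.snoc k i ∧ t ∈ ρ.act ∧ t.len = m := by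
    rintro ⟨s, hs, hlen⟩
    obtain ⟨t, k, i, rfl⟩ := APlay.exists_eq_snoc_of_len_pos s (by omega)
    refine ⟨t, k, i, rfl, ρ.prefix_closed t k i hs, ?_⟩
    rw [APlay.len_snoc] at hlen
    omega
  choose t k i hsnoc hmem hlen using unsnoc
  let split : {s : APlay K ar // s ∈ ρ.act ∧ s.len = m + 1} →
      {s : APlay K ar // s ∈ ρ.act ∧ s.len = m} × K :=
    fun s => (⟨t s, hmem s, hlen s⟩, k s)
  have split_injective : Function.Injective split := by
    intro a b hab
    simp only [split, Prod.mk.injEq, Subtype.mk.injEq] at hab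
    obtain ⟨ht, hk⟩ := hab
    have ha := a.2.1
    have hb := b.2.1
    rw [hsnoc a] at ha
    rw [hsnoc b, ← ht] at hb
    apply Subtype.ext
    rw [hsnoc a, hsnoc b, ← ht]
    exact ρ.snoc_eq_of_mem ha hb hk
  calc contProb ρ σ (m + 1)
      = ∑' s, σ.pass (split s).1.1 (split s).2 := by
        refine tsum_congr fun s => ?_
        rw [hsnoc s, PlayMeasure.act_snoc]
    _ ≤ ∑' x : {s : APlay K ar // s ∈ ρ.act ∧ s.len = m} × K, σ.pass x.1.1 x.2 :=
        ENNReal.tsum_comp_le_tsum_of_injective split_injective fun x => σ.pass x.1.1 x.2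
    _ = contProb ρ σ m := ENNReal.tsum_prod'

lemma contProb_antitone (ρ : Counterstrategy K ar) (σ : PlayMeasure K ar) :
    Antitone (contProb ρ σ) :=
  antitone_nat_of_succ_le (contProb_succ_le ρ σ)

lemma contProb_of_pass_eq_mul_add_mul {σ σ' τ : PlayMeasure K ar} {a b : ℝ≥0∞}
    (hτ : ∀ s k, τ.pass s k = a * σ.pass s k + b * σ'.pass s k)
    (ρ : Counterstrategy K ar) (m : ℕ) :
    contProb ρ τ m = a * contProb ρ σ m + b * contProb ρ σ' m := by
  simp only [contProb, PlayMeasure.act, hτ, ENNReal.tsum_add, ENNReal.tsum_mul_left]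

lemma ENNReal.iInf_mul_add_mul_of_antitone {f g : ℕ → ℝ≥0∞} (hf : Antitone f)
    (hg : Antitone g) {a b : ℝ≥0∞} (ha : a ≠ ⊤) (hb : b ≠ ⊤) :
    ⨅ m, (a * f m + b * g m) = a * (⨅ m, f m) + b * ⨅ m, g m := by
  rw [ENNReal.mul_iInf (by simp [ha]), ENNReal.mul_iInf (by simp [hb]), ENNReal.iInf_add_iInf]
  intro i j
  exact ⟨max i j, add_le_add (mul_le_mul_right (hf (le_max_left i j)) a)
    (mul_le_mul_right (hg (le_max_right i j)) b)⟩

theorem Victorious.of_pass_eq_mul_add_mul {σ σ' τ : PlayMeasure K ar} {a b : ℝ≥0∞}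
    (ha : a ≠ ⊤) (hb : b ≠ ⊤) (hτ : ∀ s k, τ.pass s k = a * σ.pass s k + b * σ'.pass s k)
    (hσ : Victorious σ) (hσ' : Victorious σ') : Victorious τ := by
  intro ρ
  simp only [contProb_of_pass_eq_mul_add_mul hτ ρ]
  rw [ENNReal.iInf_mul_add_mul_of_antitone (contProb_antitone ρ σ) (contProb_antitone ρ σ')
    ha hb]
  simp only [hσ ρ, hσ' ρ, mul_zero, add_zero]

theorem stmt_6_general {K : Type} {ar : K → Type}
    (σ σ' τ : PlayMeasure K ar)
    (p : ℝ≥0∞) (hp1 : p < 1)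
    (hτ : ∀ s k, τ.pass s k = p * σ.pass s k + (1 - p) * σ'.pass s k)
    (h1 : Victorious σ) (h2 : Victorious σ') :
    Victorious τ :=
  Victorious.of_pass_eq_mul_add_mul (hp1.trans ENNReal.one_lt_top).ne
    (ENNReal.sub_ne_top ENNReal.one_ne_top) hτ h1 h2

/-- The convex combination `σ +_p σ'` of victorious probabilistic trace
strategies is victorious. -/
theorem stmt_6 {K : Type} {ar : K → Type}
    (σ σ' τ : PlayMeasure K ar) (hσ : σ.weight = 1) (hσ' : σ'.weight = 1)
    (p : ℝ≥0∞) (hp0 : 0 < p) (hp1 : p < 1)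
    (hτ : ∀ s k, τ.pass s k = p * σ.pass s k + (1 - p) * σ'.pass s k)
    (h1 : Victorious σ) (h2 : Victorious σ') :
    Victorious τ :=
  stmt_6_general σ σ' τ p hp1 hτ h1 h2
end

section
/- Let σ be a play-measure of weight w such that for all x < w there is a finitely founded (well-founded and finitely branching) play-measure τ ≤ σ of weight at least x. Then σ is victorious. -/
open scoped ENNReal Classical

variable {K : Type} {ar : K → Type}

/-!
Fix a counterstrategy `ρ`. The mass `P^m_ρ(σ)` of the plays still alive at depth `m` exceeds
`P^(m+1)_ρ(σ)` by exactly the mass of the `ρ`-failures at depth `m`, so `inf_m P^m_ρ(σ)` is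
`w(σ)` minus the total failure mass. For a finitely founded `τ`, the plays in `ρ_act` of positive
`τ`-measure form a finitely branching tree without infinite branches, which by König's lemma has
finite height; hence the failure mass of `τ` is all of `w(τ)`. Failure mass is monotone in the
play-measure, so the hypothesis pushes the failure mass of `σ` up to `w(σ)`.
-/

namespace APlay

@[simp] lemma len_snoc_s11 (s : APlay K ar) (k : K) (i : ar k) : (s.snoc k i).len = s.len + 1 := by
  induction s with
  | nil => rfl
  | cons l j s ih => simp [snoc, len, ih]

lemma eq_nil_of_len_eq_zero {t : APlay K ar} (h : t.len = 0) : t = nil := by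
  cases t with
  | nil => rfl
  | cons => simp [len] at h

lemma snoc_inj {s t : APlay K ar} {k l : K} {i : ar k} {j : ar l} (h : s.snoc k i = t.snoc l j) :
    s = t ∧ (⟨k, i⟩ : Σ k, ar k) = ⟨l, j⟩ := by
  induction s generalizing t with
  | nil =>
    cases t with
    | nil => simpa [snoc] using h
    | cons => simpa [snoc, len] using congrArg len h
  | cons k' i' s ih =>
    cases t with
    | nil => simpa [snoc, len] using congrArg len h
    | cons l' j' t =>
      simp only [snoc, cons.injEq] at h
      obtain ⟨rfl, hi, hst⟩ := h
      obtain ⟨rfl, hkl⟩ := ih hst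
      exact ⟨by rw [eq_of_heq hi], hkl⟩

lemma exists_eq_snoc_of_len_eq_succ {t : APlay K ar} {m : ℕ} (h : t.len = m + 1) :
    ∃ (s : APlay K ar) (k : K) (i : ar k), t = s.snoc k i ∧ s.len = m := by
  induction t generalizing m with
  | nil => simp [len] at h
  | cons k i t ih =>
    cases m with
    | zero =>
      obtain rfl := eq_nil_of_len_eq_zero (t := t) (by simpa [len] using h)
      exact ⟨nil, k, i, rfl, rfl⟩
    | succ m =>
      obtain ⟨s, l, j, rfl, hs⟩ := ih (by simpa [len] using h)
      exact ⟨cons k i s, l, j, rfl, by simp [len, hs]⟩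

end APlay

namespace PlayMeasure

variable (σ : PlayMeasure K ar)

@[simp] lemma act_snoc_s11 (s : APlay K ar) (k : K) (i : ar k) : σ.act (s.snoc k i) = σ.pass s k :=
  (σ.consistent s k i).symm

lemma pass_le_act (s : APlay K ar) (k : K) : σ.pass s k ≤ σ.act s := ENNReal.le_tsum k

lemma weight_ne_top : σ.weight ≠ ∞ := ne_top_of_le_ne_top ENNReal.one_ne_top (σ.le_one .nil)

end PlayMeasure

lemma Counterstrategy.sigma_eq_of_snoc_mem (ρ : Counterstrategy K ar) {t : APlay K ar}
    {x y : Σ k, ar k} (hx : t.snoc x.1 x.2 ∈ ρ.act) (hy : t.snoc y.1 y.2 ∈ ρ.act)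
    (h : x.1 = y.1) : x = y := by
  obtain ⟨k, i⟩ := x
  obtain ⟨l, j⟩ := y
  obtain rfl : k = l := h
  rw [ρ.deterministic t k i j hx hy]

section Telescoping

variable (ρ : Counterstrategy K ar) (σ : PlayMeasure K ar)

lemma contProb_zero : contProb ρ σ 0 = σ.weight :=
  tsum_eq_single (f := fun s : {s : APlay K ar // s ∈ ρ.act ∧ s.len = 0} => σ.act s.1)
    ⟨.nil, ρ.nil_mem, rfl⟩ fun s hs => absurd (Subtype.ext (APlay.eq_nil_of_len_eq_zero s.2.2)) hs

lemma contProb_eq_tsum_pass (m : ℕ) :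
    contProb ρ σ m =
      ∑' p : {p : APlay K ar × K // p.1 ∈ ρ.act ∧ p.1.len = m}, σ.pass p.1.1 p.1.2 := by
  calc contProb ρ σ m = ∑' q : {s // s ∈ ρ.act ∧ s.len = m} × K, σ.pass q.1 q.2 :=
        ENNReal.tsum_prod.symm
    _ = _ := (Equiv.prodSubtypeFstEquivSubtypeProd (β := K)
        (p := fun s => s ∈ ρ.act ∧ s.len = m)).symm.tsum_eq fun p => σ.pass p.1.1 p.1.2

lemma contProb_succ_eq_tsum_pass (m : ℕ) :
    contProb ρ σ (m + 1) =
      ∑' p : {p : APlay K ar × K // (p.1 ∈ ρ.act ∧ p.1.len = m) ∧ ∃ i, p.1.snoc p.2 i ∈ ρ.act},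
        σ.pass p.1.1 p.1.2 := by
  let extend
      (p : {p : APlay K ar × K // (p.1 ∈ ρ.act ∧ p.1.len = m) ∧ ∃ i, p.1.snoc p.2 i ∈ ρ.act}) :
      {t : APlay K ar // t ∈ ρ.act ∧ t.len = m + 1} :=
    ⟨p.1.1.snoc p.1.2 p.2.2.choose, p.2.2.choose_spec, by rw [APlay.len_snoc_s11, p.2.1.2]⟩
  have extend_bijective : Function.Bijective extend := by
    refine ⟨fun p q hpq => ?_, fun t => ?_⟩
    · obtain ⟨hs, hk⟩ := APlay.snoc_inj (congrArg Subtype.val hpq)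
      exact Subtype.ext (Prod.ext hs (congrArg Sigma.fst hk))
    · obtain ⟨s, k, i, ht, hs⟩ := APlay.exists_eq_snoc_of_len_eq_succ t.2.2
      have hi : s.snoc k i ∈ ρ.act := ht ▸ t.2.1
      refine ⟨⟨(s, k), ⟨ρ.prefix_closed s k i hi, hs⟩, i, hi⟩, Subtype.ext ?_⟩
      rw [ht]
      exact congrArg _ (ρ.deterministic s k _ i (⟨i, hi⟩ : ∃ j, s.snoc k j ∈ ρ.act).choose_spec hi)
  rw [contProb, ← (Equiv.ofBijective extend extend_bijective).tsum_eq]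
  exact tsum_congr fun p => σ.act_snoc_s11 _ _ _

lemma contProb_eq_failProb_add_contProb_succ (m : ℕ) :
    contProb ρ σ m = failProb ρ σ m + contProb ρ σ (m + 1) := by
  have hsplit : {p : APlay K ar × K | p.1 ∈ ρ.act ∧ p.1.len = m} =
      {p | ρ.Fails p.1 p.2 ∧ p.1.len = m} ∪
        {p | (p.1 ∈ ρ.act ∧ p.1.len = m) ∧ ∃ i, p.1.snoc p.2 i ∈ ρ.act} := by
    ext p
    simp only [Counterstrategy.Fails, Set.mem_union, Set.mem_ofPred_eq]
    by_cases h : ∃ i, p.1.snoc p.2 i ∈ ρ.act <;> simp_all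
  have hdisj : Disjoint {p : APlay K ar × K | ρ.Fails p.1 p.2 ∧ p.1.len = m}
      {p | (p.1 ∈ ρ.act ∧ p.1.len = m) ∧ ∃ i, p.1.snoc p.2 i ∈ ρ.act} :=
    Set.disjoint_left.2 fun p hf hc => hc.2.elim fun i hi => hf.1.2 i hi
  rw [contProb_eq_tsum_pass, contProb_succ_eq_tsum_pass, failProb]
  exact (congrArg (fun S : Set (APlay K ar × K) => ∑' p : S, σ.pass p.1.1 p.1.2) hsplit).trans
    (ENNReal.summable.tsum_union_disjoint (f := fun p : APlay K ar × K => σ.pass p.1 p.2) hdisj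
      ENNReal.summable)

lemma sum_failProb_add_contProb (n : ℕ) :
    ∑ m ∈ Finset.range n, failProb ρ σ m + contProb ρ σ n = σ.weight := by
  induction n with
  | zero => simp [contProb_zero]
  | succ n ih => rw [Finset.sum_range_succ, add_assoc, ← contProb_eq_failProb_add_contProb_succ, ih]

lemma iInf_contProb : ⨅ m, contProb ρ σ m = σ.weight - ∑' m, failProb ρ σ m := by
  have hcont (n : ℕ) : contProb ρ σ n = σ.weight - ∑ m ∈ Finset.range n, failProb ρ σ m := by
    refine ENNReal.eq_sub_of_add_eq (ne_top_of_le_ne_top σ.weight_ne_top ?_) ?_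
    · rw [← sum_failProb_add_contProb ρ σ n]
      exact le_self_add
    · rw [add_comm, sum_failProb_add_contProb]
  rw [ENNReal.tsum_eq_iSup_nat, ENNReal.sub_iSup σ.weight_ne_top]
  exact iInf_congr hcont

lemma failProb_mono {σ τ : PlayMeasure K ar} (h : ∀ s k, τ.pass s k ≤ σ.pass s k) (m : ℕ) :
    failProb ρ τ m ≤ failProb ρ σ m :=
  ENNReal.tsum_le_tsum fun _ => h _ _

end Telescoping

section Konig

variable {ρ : Counterstrategy K ar} {τ : PlayMeasure K ar}

variable (ρ τ) in
def ReachesDepth : ℕ → APlay K ar → Prop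
  | 0, t => t ∈ ρ.act ∧ 0 < τ.act t
  | n + 1, t => ∃ x : Σ k, ar k, ReachesDepth n (t.snoc x.1 x.2)

namespace ReachesDepth

lemma mem_support {n : ℕ} {t : APlay K ar} (h : ReachesDepth ρ τ n t) :
    t ∈ ρ.act ∧ 0 < τ.act t := by
  induction n generalizing t with
  | zero => exact h
  | succ n ih =>
    obtain ⟨x, hx⟩ := h
    obtain ⟨hmem, hpos⟩ := ih hx
    rw [τ.act_snoc_s11] at hpos
    exact ⟨ρ.prefix_closed _ _ _ hmem, hpos.trans_le (τ.pass_le_act _ _)⟩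

lemma antitone (t : APlay K ar) : Antitone fun n => ReachesDepth ρ τ n t := by
  refine antitone_nat_of_succ_le fun n => ?_
  induction n generalizing t with
  | zero => exact fun h => h.mem_support
  | succ n ih => exact fun ⟨x, hx⟩ => ⟨x, ih _ hx⟩

lemma nil_of_len_eq {m n : ℕ} {t : APlay K ar} (ht : t.len = n) (h : ReachesDepth ρ τ m t) :
    ReachesDepth ρ τ (m + n) .nil := by
  induction n generalizing t m with
  | zero => rwa [APlay.eq_nil_of_len_eq_zero ht] at h
  | succ n ih =>
    obtain ⟨s, k, i, rfl, hs⟩ := APlay.exists_eq_snoc_of_len_eq_succ ht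
    rw [← add_assoc, add_right_comm]
    exact ih hs ⟨⟨k, i⟩, h⟩

lemma nil_of_contProb_ne_zero {n : ℕ} (h : contProb ρ τ n ≠ 0) : ReachesDepth ρ τ n .nil := by
  obtain ⟨⟨t, hmem, hlen⟩, hpos⟩ := not_forall.1 (mt ENNReal.tsum_eq_zero.2 h)
  simpa using nil_of_len_eq hlen (show ReachesDepth ρ τ 0 t from ⟨hmem, pos_iff_ne_zero.2 hpos⟩)

/-- König's lemma; the tree is finitely branching because `τ` is and `ρ` is deterministic. -/
lemma exists_snoc_forall (hτ : τ.FinBranch) {t : APlay K ar} (ht : ∀ n, ReachesDepth ρ τ n t) :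
    ∃ x : Σ k, ar k, ∀ n, ReachesDepth ρ τ n (t.snoc x.1 x.2) := by
  by_contra! hbound
  choose depth hdepth using hbound
  set children := {x : Σ k, ar k | ReachesDepth ρ τ 0 (t.snoc x.1 x.2)}
  have children_finite : children.Finite := by
    refine Set.Finite.of_finite_image (f := Sigma.fst) ((hτ t).subset ?_) fun x hx y hy => ?_
    · rintro _ ⟨x, hx, rfl⟩
      simpa using hx.2
    · exact ρ.sigma_eq_of_snoc_mem hx.1 hy.1
  obtain ⟨N, hN⟩ := (children_finite.image depth).bddAbove
  obtain ⟨x, hx⟩ := ht (N + 1)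
  exact hdepth x (antitone _ (hN ⟨x, hx.mem_support, rfl⟩) hx)

lemma not_wellFoundedPM (hτ : τ.FinBranch) (h : ∀ n, ReachesDepth ρ τ n .nil) :
    ¬ τ.WellFoundedPM := by
  let Deep := {t : APlay K ar // ∀ n, ReachesDepth ρ τ n t}
  choose next hnext using fun t : Deep => exists_snoc_forall hτ t.2
  let step (t : Deep) : Deep := ⟨t.1.snoc (next t).1 (next t).2, hnext t⟩
  let branch (n : ℕ) : Deep := step^[n] ⟨.nil, h⟩
  have prefixPlay_eq (n : ℕ) : prefixPlay (fun n => next (branch n)) n = (branch n).1 := by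
    induction n with
    | zero => rfl
    | succ n ih =>
      simp only [prefixPlay, ih, branch, Function.iterate_succ_apply']
      rfl
  refine not_not.2 ⟨fun n => next (branch n), fun n => ?_⟩
  rw [prefixPlay_eq, ← τ.act_snoc_s11 _ _ (next (branch n)).2]
  exact ((hnext (branch n)) 0).2

end ReachesDepth

lemma exists_contProb_eq_zero (hτ : τ.FinFounded) : ∃ n, contProb ρ τ n = 0 := by
  by_contra! h
  exact ReachesDepth.not_wellFoundedPM hτ.2
    (fun n => ReachesDepth.nil_of_contProb_ne_zero (h n)) hτ.1

lemma weight_le_tsum_failProb (hτ : τ.FinFounded) : τ.weight ≤ ∑' m, failProb ρ τ m := by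
  obtain ⟨n, hn⟩ := exists_contProb_eq_zero (ρ := ρ) hτ
  rw [← tsub_eq_zero_iff_le, ← iInf_contProb]
  exact le_zero_iff.1 (hn ▸ iInf_le _ n)

end Konig

/-- If for every `x < w(σ)` there is a finitely founded play-measure `τ ≤ σ`
of weight at least `x`, then `σ` is victorious. -/
theorem stmt_11 {K : Type} {ar : K → Type} (σ : PlayMeasure K ar)
    (h : ∀ x < σ.weight, ∃ τ : PlayMeasure K ar,
      (∀ s k, τ.pass s k ≤ σ.pass s k) ∧ x ≤ τ.weight ∧ τ.FinFounded) :
    Victorious σ := by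
  intro ρ
  rw [iInf_contProb, tsub_eq_zero_iff_le]
  refine le_of_forall_lt_imp_le_of_dense fun x hx => ?_
  obtain ⟨τ, hτσ, hxτ, hτ⟩ := h x hx
  calc x ≤ τ.weight := hxτ
    _ ≤ ∑' m, failProb ρ τ m := weight_le_tsum_failProb hτ
    _ ≤ ∑' m, failProb ρ σ m := ENNReal.tsum_le_tsum (failProb_mono ρ hτσ)
end
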